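/- (Tractable certificate for the hyperbox inner approximation.) Let p₀⁻, p₀⁺ ∈ ℝ^T with p₀⁻ ≤ p₀⁺ componentwise. Suppose there exist an N×T real matrix A and c ∈ ℝ^N such that D A = I (the T×T identity), D c + b = 0, and for every row index i of W: ∑_j ( (W A)_{ij} (p₀⁺_j + p₀⁻_j)/2 + |(W A)_{ij}| (p₀⁺_j − p₀⁻_j)/2 ) ≤ z_i − (W c)_i. Then the hyperbox {p₀ : p₀⁻ ≤ p₀ ≤ p₀⁺} is contained in the DSFS S. -/
import Mathlib


/-- Tractable certificate for the hyperbox inner approximation: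
if there exist `A : ℝ^(N×T)` and `c : ℝ^N` with `D A = I`, `D c + b = 0`, and for
every row `i` of `W`,
`∑ j, ((W*A) i j * (p₀⁺ j + p₀⁻ j)/2 + |(W*A) i j| * (p₀⁺ j - p₀⁻ j)/2) ≤ z i - (W c) i`,
then the hyperbox `{p₀ : p₀⁻ ≤ p₀ ≤ p₀⁺}` is contained in the DSFS `S`. -/
theorem tractable_certificate_hyperbox (T N q : ℕ) (hT : 0 < T) (hN : 0 < N) (hq : 0 < q)
    (W : Matrix (Fin q) (Fin N) ℝ) (z : Fin q → ℝ)
    (D : Matrix (Fin T) (Fin N) ℝ) (b : Fin T → ℝ)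
    (p₀m p₀p : Fin T → ℝ) (hbox : p₀m ≤ p₀p)
    (A : Matrix (Fin N) (Fin T) ℝ) (c : Fin N → ℝ)
    (hDA : D * A = 1) (hDc : D.mulVec c + b = 0)
    (hrow : ∀ i : Fin q,
      ∑ j, ((W * A) i j * (p₀p j + p₀m j) / 2 + |(W * A) i j| * (p₀p j - p₀m j) / 2)
        ≤ z i - W.mulVec c i) :
    {p₀ : Fin T → ℝ | p₀m ≤ p₀ ∧ p₀ ≤ p₀p} ⊆
        {p₀ : Fin T → ℝ | ∃ p : Fin N → ℝ, W.mulVec p ≤ z ∧ p₀ = D.mulVec p + b} := by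
  rintro p₀ ⟨hlo, hhi⟩
  refine ⟨A.mulVec p₀ + c, ?_, ?_⟩
  · intro i
    have key : W.mulVec (A.mulVec p₀ + c) i
        = ∑ j, (W * A) i j * p₀ j + W.mulVec c i := by
      rw [Matrix.mulVec_add, Matrix.mulVec_mulVec]
      simp [Matrix.mulVec, dotProduct]
    have hterm : ∀ j, (W * A) i j * p₀ j
        ≤ (W * A) i j * (p₀p j + p₀m j) / 2 + |(W * A) i j| * (p₀p j - p₀m j) / 2 := by
      intro j
      have h1 := hlo j
      have h2 := hhi j
      have habs : |p₀ j - (p₀p j + p₀m j) / 2| ≤ (p₀p j - p₀m j) / 2 := by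
        rw [abs_le]; constructor <;> linarith
      have := (abs_mul ((W * A) i j) (p₀ j - (p₀p j + p₀m j) / 2)) ▸
        le_abs_self ((W * A) i j * (p₀ j - (p₀p j + p₀m j) / 2))
      have h3 : (W * A) i j * (p₀ j - (p₀p j + p₀m j) / 2)
          ≤ |(W * A) i j| * ((p₀p j - p₀m j) / 2) :=
        this.trans (mul_le_mul_of_nonneg_left habs (abs_nonneg _))
      nlinarith [h3]
    calc W.mulVec (A.mulVec p₀ + c) i
        = ∑ j, (W * A) i j * p₀ j + W.mulVec c i := key
      _ ≤ ∑ j, ((W * A) i j * (p₀p j + p₀m j) / 2 + |(W * A) i j| * (p₀p j - p₀m j) / 2)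
            + W.mulVec c i := by
            gcongr with j
            have := hterm j; linarith
      _ ≤ z i := by linarith [hrow i]
  · have : D.mulVec (A.mulVec p₀ + c) = p₀ + (D.mulVec c) := by
      rw [Matrix.mulVec_add, Matrix.mulVec_mulVec, hDA, Matrix.one_mulVec]
    rw [this]
    have : D.mulVec c = -b := by
      funext i
      have h := congrFun hDc i
      simp [Pi.add_apply] at h
      simp [Pi.neg_apply]
      linarith
    rw [this]; funext i; simp
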